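/- Let R be a commutative A-algebra domain and suppose the ideal I ⊆ R satisfies I^⟨m⟩_A · I^⟨n⟩_A ⊆ I^⟨m+n⟩_A for all m, n (e.g. R a polynomial ring over a field A of characteristic 0). Then the differential closure I^diff_A is an ideal of R: it contains I, is closed under multiplication by elements of R, and is closed under addition. -/

import Mathlib

/-! For `r ∈ I`, the equality `I^⟨1⟩ = I` and multiplicativity give `r ^ n ∈ I^⟨n⟩`.
For a sum, the exponent `N` in the witness `c_a c_b a^N b^N` of `a + b` lifts every binomial
term `a^k b^(n-k)` into the range where the hypotheses on `a` and `b` apply: the product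
`(c_a a^(N+k)) (c_b b^(N+n-k))` lies in `I^⟨2N+n⟩ ⊆ I^⟨n⟩`. -/

/-- `IsDiffOp A n φ` says that the `A`-linear endomorphism `φ` of `R` is an
`A`-linear differential operator of order at most `n`. -/
def IsDiffOp (A : Type*) {R : Type*} [CommRing A] [CommRing R] [Algebra A R] :
    ℕ → (R →ₗ[A] R) → Prop
  | 0 => fun φ => ∃ r : R, φ = LinearMap.mulLeft A r
  | n + 1 => fun φ => ∀ a : R,
      IsDiffOp A n (φ ∘ₗ LinearMap.mulLeft A a - LinearMap.mulLeft A a ∘ₗ φ)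

theorem isDiffOp_comp_mulLeft (A : Type*) {R : Type*} [CommRing A] [CommRing R]
    [Algebra A R] (x : R) (n : ℕ) :
    ∀ φ : R →ₗ[A] R, IsDiffOp A n φ → IsDiffOp A n (φ ∘ₗ LinearMap.mulLeft A x) := by
  induction n with
  | zero =>
    rintro φ ⟨r, rfl⟩
    exact ⟨r * x, by ext y; simp [mul_assoc]⟩
  | succ n ih =>
    intro φ h a
    have h2 := ih _ (h a)
    have key : (φ ∘ₗ LinearMap.mulLeft A x) ∘ₗ LinearMap.mulLeft A a -
        LinearMap.mulLeft A a ∘ₗ (φ ∘ₗ LinearMap.mulLeft A x) =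
        (φ ∘ₗ LinearMap.mulLeft A a - LinearMap.mulLeft A a ∘ₗ φ) ∘ₗ LinearMap.mulLeft A x := by
      ext y
      simp [mul_left_comm]
    rw [key]
    exact h2

/-- The `n`-th differential power of an ideal `I` of the `A`-algebra `R`:
the set of `r ∈ R` such that `∂ r ∈ I` for every `A`-linear differential
operator `∂` of order at most `n - 1`. -/
def diffPow (A : Type*) {R : Type*} [CommRing A] [CommRing R] [Algebra A R]
    (n : ℕ) (I : Ideal R) : Ideal R where
  carrier := {r | ∀ φ : R →ₗ[A] R, IsDiffOp A (n - 1) φ → φ r ∈ I}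
  add_mem' := fun hx hy φ hφ => by simp [map_add]; exact I.add_mem (hx φ hφ) (hy φ hφ)
  zero_mem' := fun φ _ => by simpa using I.zero_mem
  smul_mem' := fun c x hx => by
    intro φ hφ
    have := hx (φ ∘ₗ LinearMap.mulLeft A c) (isDiffOp_comp_mulLeft A c _ φ hφ)
    simpa [smul_eq_mul] using this

/-- The differential closure of an ideal `I` with respect to `A`: elements `r`
such that `c * r ^ n ∈ I^⟨n⟩_A` for some fixed nonzero `c` and all `n ≫ 0`. -/
def diffClosure (A : Type*) {R : Type*} [CommRing A] [CommRing R] [Algebra A R]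
    (I : Ideal R) : Set R :=
  {r | ∃ c : R, c ≠ 0 ∧ ∃ N : ℕ, ∀ n : ℕ, N ≤ n → c * r ^ n ∈ diffPow A n I}

section DiffOp

variable {A R : Type*} [CommRing A] [CommRing R] [Algebra A R]

theorem IsDiffOp.succ {n : ℕ} {φ : R →ₗ[A] R} (h : IsDiffOp A n φ) : IsDiffOp A (n + 1) φ := by
  induction n generalizing φ with
  | zero =>
    obtain ⟨r, rfl⟩ := h
    exact fun a => ⟨0, by ext y; simp [mul_left_comm]⟩
  | succ n ih => exact fun a => ih (h a)

theorem IsDiffOp.mono {m n : ℕ} (hmn : m ≤ n) {φ : R →ₗ[A] R} (h : IsDiffOp A m φ) :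
    IsDiffOp A n φ := by
  induction n, hmn using Nat.le_induction with
  | base => exact h
  | succ n _ ih => exact ih.succ

variable (A) (I : Ideal R)

theorem diffPow_antitone : Antitone fun n => diffPow A n I :=
  fun _ _ hmn _ hr φ hφ => hr φ (hφ.mono (Nat.sub_le_sub_right hmn 1))

theorem diffPow_one : diffPow A 1 I = I := by
  ext r
  refine ⟨fun hr => by simpa using hr _ ⟨1, rfl⟩, ?_⟩
  rintro hr φ ⟨s, rfl⟩
  exact I.mul_mem_left s hr

variable {A I}

theorem pow_mem_diffPow
    (hmul : ∀ m n : ℕ, diffPow A m I * diffPow A n I ≤ diffPow A (m + n) I)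
    {r : R} (hr : r ∈ I) {n : ℕ} (hn : 1 ≤ n) : r ^ n ∈ diffPow A n I := by
  induction n, hn using Nat.le_induction with
  | base => simpa [diffPow_one] using hr
  | succ n _ ih =>
    rw [pow_succ', add_comm]
    exact hmul 1 n (Ideal.mul_mem_mul (by rwa [diffPow_one]) ih)

end DiffOp

section DiffClosure

variable {A R : Type*} [CommRing A] [CommRing R] [Algebra A R] {I : Ideal R}

theorem subset_diffClosure [Nontrivial R]
    (hmul : ∀ m n : ℕ, diffPow A m I * diffPow A n I ≤ diffPow A (m + n) I) :
    (I : Set R) ⊆ diffClosure A I :=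
  fun _ hr => ⟨1, one_ne_zero, 1, fun _ hn => by simpa using pow_mem_diffPow hmul hr hn⟩

theorem mul_mem_diffClosure (r : R) {x : R} (hx : x ∈ diffClosure A I) :
    r * x ∈ diffClosure A I := by
  obtain ⟨c, hc, N, hN⟩ := hx
  refine ⟨c, hc, N, fun n hn => ?_⟩
  have hcx : c * (r * x) ^ n = r ^ n * (c * x ^ n) := by ring
  rw [hcx]
  exact (diffPow A n I).mul_mem_left _ (hN n hn)

theorem mul_pow_mul_pow_mem_diffPow
    (hmul : ∀ m n : ℕ, diffPow A m I * diffPow A n I ≤ diffPow A (m + n) I)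
    {a b ca cb : R} {N : ℕ}
    (ha : ∀ n, N ≤ n → ca * a ^ n ∈ diffPow A n I)
    (hb : ∀ n, N ≤ n → cb * b ^ n ∈ diffPow A n I) (k j : ℕ) :
    ca * cb * a ^ N * b ^ N * (a ^ k * b ^ j) ∈ diffPow A (k + j) I := by
  have hprod : (ca * a ^ (N + k)) * (cb * b ^ (N + j)) ∈ diffPow A (N + k + (N + j)) I :=
    hmul _ _ (Ideal.mul_mem_mul (ha _ (Nat.le_add_right N k)) (hb _ (Nat.le_add_right N j)))
  have hterm : ca * cb * a ^ N * b ^ N * (a ^ k * b ^ j) =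
      (ca * a ^ (N + k)) * (cb * b ^ (N + j)) := by ring
  rw [hterm]
  exact diffPow_antitone A I (by omega) hprod

theorem mul_add_pow_mem_diffPow
    (hmul : ∀ m n : ℕ, diffPow A m I * diffPow A n I ≤ diffPow A (m + n) I)
    {a b ca cb : R} {N : ℕ}
    (ha : ∀ n, N ≤ n → ca * a ^ n ∈ diffPow A n I)
    (hb : ∀ n, N ≤ n → cb * b ^ n ∈ diffPow A n I) (n : ℕ) :
    ca * cb * a ^ N * b ^ N * (a + b) ^ n ∈ diffPow A n I := by
  rw [add_pow, Finset.mul_sum]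
  refine Ideal.sum_mem _ fun k hk => ?_
  have hkn : k + (n - k) = n := Nat.add_sub_of_le (Finset.mem_range_succ_iff.mp hk)
  rw [← mul_assoc, mul_comm]
  refine (diffPow A n I).mul_mem_left _ ?_
  simpa only [hkn] using mul_pow_mul_pow_mem_diffPow hmul ha hb k (n - k)

theorem add_mem_diffClosure [IsDomain R]
    (hmul : ∀ m n : ℕ, diffPow A m I * diffPow A n I ≤ diffPow A (m + n) I)
    {a b : R} (ha : a ∈ diffClosure A I) (hb : b ∈ diffClosure A I) :
    a + b ∈ diffClosure A I := by
  rcases eq_or_ne a 0 with rfl | ha0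
  · simpa using hb
  rcases eq_or_ne b 0 with rfl | hb0
  · simpa using ha
  obtain ⟨ca, hca, Na, hNa⟩ := ha
  obtain ⟨cb, hcb, Nb, hNb⟩ := hb
  refine ⟨ca * cb * a ^ max Na Nb * b ^ max Na Nb, by simp [hca, hcb, ha0, hb0], 0, fun n _ => ?_⟩
  exact mul_add_pow_mem_diffPow hmul (fun n hn => hNa n (le_of_max_le_left hn))
    (fun n hn => hNb n (le_of_max_le_right hn)) n

end DiffClosure

/-- If `I^⟨m⟩ ⋅ I^⟨n⟩ ⊆ I^⟨m+n⟩` for all `m, n`, then the differential closure of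
`I` is an ideal: it contains `I`, and is closed under multiplication by ring
elements and under addition. -/
theorem diffClosure_isIdeal {A R : Type*} [CommRing A] [CommRing R] [IsDomain R]
    [Algebra A R] (I : Ideal R)
    (hmul : ∀ m n : ℕ, diffPow A m I * diffPow A n I ≤ diffPow A (m + n) I) :
    (I : Set R) ⊆ diffClosure A I ∧
      (∀ r x : R, x ∈ diffClosure A I → r * x ∈ diffClosure A I) ∧
      ∀ a b : R, a ∈ diffClosure A I → b ∈ diffClosure A I →
        a + b ∈ diffClosure A I :=
  ⟨subset_diffClosure hmul, fun r _ hx => mul_mem_diffClosure r hx,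
    fun _ _ ha hb => add_mem_diffClosure hmul ha hb⟩
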